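/- arXiv:1803.00952 — 2 statements merged into one kernel-verified Lean document; each statement's English description precedes it below -/
import Mathlib

section
/- Let v_0 < v_1 < … < v_m < v_{m+1} be real breakpoints and y_1, …, y_m ∈ {0,1} satisfy the ordering constraints y_j ≤ y_{j+1} for j = 1,…,m−1. If x ∈ ℝ satisfies x ≥ v_0 + Σ_{j=1}^m (v_j − v_{j−1})(1 − y_j) and x ≤ v_{m+1} + Σ_{j=1}^m (v_j − v_{j+1}) y_j, then: for every j with y_j = 1 we have x ≤ v_j, and for every j with y_j = 0 we have x ≥ v_j. -/
/-! The ordering constraints make `y` monotone, so `y j = 1` forces `y k = 1` for all `k ≥ j`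
and `y j = 0` forces `y k = 0` for all `k ≤ j`. In the upper linking constraint the terms
with `k ≥ j` then telescope to `v j - v (m + 1)` while the remaining ones are `≤ 0`, giving
`x ≤ v j`; symmetrically the lower constraint telescopes to `v j` plus nonnegative terms. -/

open Finset

namespace LinkingConstraints

lemma sum_Icc_sub_succ (v : ℕ → ℝ) {j m : ℕ} (hjm : j ≤ m + 1) :
    ∑ k ∈ Icc j m, (v k - v (k + 1)) = v j - v (m + 1) := by
  rcases hjm.eq_or_lt with rfl | h
  · simp
  · rw [← neg_sub (v (m + 1)), ← sum_Icc_sub (Nat.lt_succ_iff.mp h), ← sum_neg_distrib]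
    simp only [neg_sub]

lemma sum_Icc_one_sub_pred (v : ℕ → ℝ) (j : ℕ) :
    ∑ k ∈ Icc 1 j, (v k - v (k - 1)) = v j - v 0 := by
  rcases Nat.eq_zero_or_pos j with rfl | hj
  · simp
  · simpa using sum_Icc_sub hj (fun k => v (k - 1))

lemma sum_mul_le_sum_Icc_of_eq_one {a y : ℕ → ℝ} {j m : ℕ} (hj : 1 ≤ j)
    (ha : ∀ k ∈ Ico 1 j, a k ≤ 0) (hy : ∀ k ∈ Ico 1 j, 0 ≤ y k)
    (hone : ∀ k ∈ Icc j m, y k = 1) :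
    ∑ k ∈ Icc 1 m, a k * y k ≤ ∑ k ∈ Icc j m, a k := by
  have hfilter : (Icc 1 m).filter (j ≤ ·) = Icc j m := by
    ext k; simp only [mem_filter, mem_Icc]; omega
  rw [← hfilter, sum_filter]
  refine sum_le_sum fun k hk => ?_
  have hk := mem_Icc.mp hk
  split_ifs with hjk
  · rw [hone k (mem_Icc.mpr ⟨hjk, hk.2⟩), mul_one]
  · have hk' : k ∈ Ico 1 j := mem_Ico.mpr ⟨hk.1, by omega⟩
    exact mul_nonpos_of_nonpos_of_nonneg (ha k hk') (hy k hk')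

lemma sum_Icc_le_sum_mul_one_sub_of_eq_zero {b y : ℕ → ℝ} {j m : ℕ} (hjm : j ≤ m)
    (hb : ∀ k ∈ Ioc j m, 0 ≤ b k) (hy : ∀ k ∈ Ioc j m, y k ≤ 1)
    (hzero : ∀ k ∈ Icc 1 j, y k = 0) :
    ∑ k ∈ Icc 1 j, b k ≤ ∑ k ∈ Icc 1 m, b k * (1 - y k) := by
  have hfilter : (Icc 1 m).filter (· ≤ j) = Icc 1 j := by
    ext k; simp only [mem_filter, mem_Icc]; omega
  rw [← hfilter, sum_filter]
  refine sum_le_sum fun k hk => ?_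
  have hk := mem_Icc.mp hk
  split_ifs with hkj
  · rw [hzero k (mem_Icc.mpr ⟨hk.1, hkj⟩), sub_zero, mul_one]
  · have hk' : k ∈ Ioc j m := mem_Ioc.mpr ⟨by omega, hk.2⟩
    exact mul_nonneg (hb k hk') (sub_nonneg.mpr (hy k hk'))

lemma eq_one_of_monotoneOn {y : ℕ → ℝ} {j m : ℕ} (hy : MonotoneOn y (Set.Icc 1 m))
    (hy_le : ∀ k ∈ Icc 1 m, y k ≤ 1) (hj : 1 ≤ j) (hyj : y j = 1) :
    ∀ k ∈ Icc j m, y k = 1 := fun k hk => by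
  obtain ⟨hjk, hkm⟩ := mem_Icc.mp hk
  refine le_antisymm (hy_le k (mem_Icc.mpr ⟨by omega, hkm⟩)) (hyj ▸ hy ?_ ?_ hjk)
  exacts [⟨hj, by omega⟩, ⟨by omega, hkm⟩]

lemma eq_zero_of_monotoneOn {y : ℕ → ℝ} {j m : ℕ} (hy : MonotoneOn y (Set.Icc 1 m))
    (hy_nonneg : ∀ k ∈ Icc 1 m, 0 ≤ y k) (hjm : j ≤ m) (hyj : y j = 0) :
    ∀ k ∈ Icc 1 j, y k = 0 := fun k hk => by
  obtain ⟨hk1, hkj⟩ := mem_Icc.mp hk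
  refine le_antisymm (hyj ▸ hy ?_ ?_ hkj) (hy_nonneg k (mem_Icc.mpr ⟨hk1, by omega⟩))
  exacts [⟨hk1, by omega⟩, ⟨by omega, hjm⟩]

end LinkingConstraints

open LinkingConstraints

/-- Correctness of the linking constraints: under the ordering constraints on the
binary variables `y`, the two linking inequalities imply `x ≤ v j` whenever `y j = 1`
and `x ≥ v j` whenever `y j = 0`. -/
theorem stmt_6 (m : ℕ) (v : ℕ → ℝ) (hv : ∀ j ≤ m, v j < v (j + 1))
    (y : ℕ → ℝ)
    (hy01 : ∀ j ∈ Finset.Icc 1 m, y j = 0 ∨ y j = 1)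
    (hmono : ∀ j, 1 ≤ j → j + 1 ≤ m → y j ≤ y (j + 1))
    (x : ℝ)
    (hxl : v 0 + ∑ j ∈ Finset.Icc 1 m, (v j - v (j - 1)) * (1 - y j) ≤ x)
    (hxu : x ≤ v (m + 1) + ∑ j ∈ Finset.Icc 1 m, (v j - v (j + 1)) * y j) :
    ∀ j ∈ Finset.Icc 1 m, (y j = 1 → x ≤ v j) ∧ (y j = 0 → v j ≤ x) := by
  have hy_nonneg : ∀ k ∈ Icc 1 m, 0 ≤ y k := fun k hk => by
    rcases hy01 k hk with h | h <;> simp [h]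
  have hy_le : ∀ k ∈ Icc 1 m, y k ≤ 1 := fun k hk => by
    rcases hy01 k hk with h | h <;> simp [h]
  have hy_mono : MonotoneOn y (Set.Icc 1 m) :=
    monotoneOn_of_le_add_one Set.ordConnected_Icc fun k _ hk hk1 => hmono k hk.1 hk1.2
  intro j hj
  obtain ⟨hj1, hjm⟩ := mem_Icc.mp hj
  constructor
  · intro hyj
    have hsum := sum_mul_le_sum_Icc_of_eq_one hj1
      (fun k hk => sub_nonpos.mpr (hv k (by have := mem_Ico.mp hk; omega)).le)
      (fun k hk => hy_nonneg k (by simp only [mem_Ico, mem_Icc] at hk ⊢; omega))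
      (eq_one_of_monotoneOn hy_mono hy_le hj1 hyj)
    rw [sum_Icc_sub_succ v (by omega)] at hsum
    linarith
  · intro hyj
    have hv_pred : ∀ k ∈ Ioc j m, v (k - 1) < v k := fun k hk => by
      have hk := mem_Ioc.mp hk
      simpa [Nat.sub_add_cancel (by omega : 1 ≤ k)] using hv (k - 1) (by omega)
    have hsum := sum_Icc_le_sum_mul_one_sub_of_eq_zero hjm
      (fun k hk => sub_nonneg.mpr (hv_pred k hk).le)
      (fun k hk => hy_le k (by simp only [mem_Ioc, mem_Icc] at hk ⊢; omega))
      (eq_zero_of_monotoneOn hy_mono hy_nonneg hjm hyj)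
    rw [sum_Icc_one_sub_pred] at hsum
    linarith
end

section
/- Let z : L → ℝ≥0 over a finite leaf set L of a binary tree with root such that Σ_{l∈L} z_l = 1, and suppose binary values y_s ∈ {0,1} are given for each split node s with the constraints Σ_{l ∈ Left(s)} z_l ≤ y_s and Σ_{l ∈ Right(s)} z_l ≤ 1 − y_s, where Left(s) and Right(s) are the leaf sets of the left and right subtrees of s. Then z is integral: there is exactly one leaf l* with z_{l*} = 1 and z_l = 0 for all other leaves. -/
/-- A rooted binary tree with naturally numbered leaves and split nodes. -/
inductive BTree where
  | leaf (l : ℕ) : BTree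
  | node (s : ℕ) (left right : BTree) : BTree

/-- The set of leaves of a binary tree. -/
def BTree.leaves : BTree → Finset ℕ
  | .leaf l => {l}
  | .node _ a b => a.leaves ∪ b.leaves

/-- The set of split nodes of a binary tree. -/
def BTree.splitNodes : BTree → Finset ℕ
  | .leaf _ => ∅
  | .node s a b => insert s (a.splitNodes ∪ b.splitNodes)

/-- Well-formedness: leaf labels of the two subtrees are disjoint and split labels are
distinct throughout the tree. -/
def BTree.WF : BTree → Prop
  | .leaf _ => True
  | .node s a b => a.WF ∧ b.WF ∧ Disjoint a.leaves b.leaves ∧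
      s ∉ a.splitNodes ∪ b.splitNodes ∧ Disjoint a.splitNodes b.splitNodes

/-- Leaves of the left subtree of the split node labeled `s`. -/
def BTree.leftLeaves : BTree → ℕ → Finset ℕ
  | .leaf _, _ => ∅
  | .node s' a b, s =>
      (if s' = s then a.leaves else ∅) ∪ a.leftLeaves s ∪ b.leftLeaves s

/-- Leaves of the right subtree of the split node labeled `s`. -/
def BTree.rightLeaves : BTree → ℕ → Finset ℕ
  | .leaf _, _ => ∅
  | .node s' a b, s =>
      (if s' = s then b.leaves else ∅) ∪ a.rightLeaves s ∪ b.rightLeaves s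


/-!
The leaf to select is found by walking down from the root, going left at a split `s`
exactly when `y s = 1`. Any other leaf `l` leaves this path at some split `s`: then `l`
is a left leaf of `s` while `y s = 0`, or a right leaf of `s` while `y s = 1`, and in
either case the corresponding constraint caps `z l` by `0`. So `z` vanishes off the
selected leaf, and `∑ z = 1` puts all the mass on it.
-/

namespace BTree

noncomputable def selectedLeaf (y : ℕ → ℝ) : BTree → ℕ
  | .leaf l => l
  | .node s a b => if y s = 1 then a.selectedLeaf y else b.selectedLeaf y

theorem selectedLeaf_mem_leaves (y : ℕ → ℝ) (t : BTree) : t.selectedLeaf y ∈ t.leaves := by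
  induction t with
  | leaf l => simp [selectedLeaf, leaves]
  | node s a b iha ihb =>
    unfold selectedLeaf leaves
    split_ifs
    · exact Finset.mem_union_left _ iha
    · exact Finset.mem_union_right _ ihb

theorem exists_split_of_ne_selectedLeaf (y : ℕ → ℝ) {t : BTree} {l : ℕ} (hl : l ∈ t.leaves)
    (hne : l ≠ t.selectedLeaf y) :
    ∃ s ∈ t.splitNodes,
      (y s ≠ 1 ∧ l ∈ t.leftLeaves s) ∨ (y s = 1 ∧ l ∈ t.rightLeaves s) := by
  induction t with
  | leaf l' => simp_all [leaves, selectedLeaf]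
  | node s a b iha ihb =>
    simp only [leaves, Finset.mem_union] at hl
    by_cases hys : y s = 1 <;> simp only [selectedLeaf, hys, if_true, if_false] at hne
    · rcases hl with hla | hlb
      · obtain ⟨s', hs', hsep⟩ := iha hla hne
        refine ⟨s', by simp [splitNodes, hs'], ?_⟩
        simp only [leftLeaves, rightLeaves, Finset.mem_union]
        tauto
      · exact ⟨s, by simp [splitNodes], Or.inr ⟨hys, by simp [rightLeaves, hlb]⟩⟩
    · rcases hl with hla | hlb
      · exact ⟨s, by simp [splitNodes], Or.inl ⟨hys, by simp [leftLeaves, hla]⟩⟩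
      · obtain ⟨s', hs', hsep⟩ := ihb hlb hne
        refine ⟨s', by simp [splitNodes, hs'], ?_⟩
        simp only [leftLeaves, rightLeaves, Finset.mem_union]
        tauto

theorem eq_zero_of_ne_selectedLeaf {t : BTree} {z y : ℕ → ℝ} (hz : ∀ l, 0 ≤ z l)
    (hy : ∀ s ∈ t.splitNodes, y s = 0 ∨ y s = 1)
    (hleft : ∀ s ∈ t.splitNodes, ∑ l ∈ t.leftLeaves s, z l ≤ y s)
    (hright : ∀ s ∈ t.splitNodes, ∑ l ∈ t.rightLeaves s, z l ≤ 1 - y s)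
    {l : ℕ} (hl : l ∈ t.leaves) (hne : l ≠ t.selectedLeaf y) : z l = 0 := by
  have le_sum {S : Finset ℕ} (h : l ∈ S) : z l ≤ ∑ l ∈ S, z l :=
    Finset.single_le_sum (fun i _ => hz i) h
  obtain ⟨s, hs, ⟨hys, hlL⟩ | ⟨hys, hlR⟩⟩ := exists_split_of_ne_selectedLeaf y hl hne
  · have hy0 : y s = 0 := (hy s hs).resolve_right hys
    linarith [hz l, le_sum hlL, hleft s hs]
  · linarith [hz l, le_sum hlR, hright s hs]

end BTree

theorem stmt_8_general (t : BTree) (z : ℕ → ℝ) (hz : ∀ l, 0 ≤ z l)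
    (hsum : ∑ l ∈ t.leaves, z l = 1)
    (y : ℕ → ℝ) (hy : ∀ s ∈ t.splitNodes, y s = 0 ∨ y s = 1)
    (hleft : ∀ s ∈ t.splitNodes, ∑ l ∈ t.leftLeaves s, z l ≤ y s)
    (hright : ∀ s ∈ t.splitNodes, ∑ l ∈ t.rightLeaves s, z l ≤ 1 - y s) :
    ∃! l₀, l₀ ∈ t.leaves ∧ z l₀ = 1 ∧ ∀ l ∈ t.leaves, l ≠ l₀ → z l = 0 := by
  have hoff : ∀ l ∈ t.leaves, l ≠ t.selectedLeaf y → z l = 0 :=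
    fun l hl hne => BTree.eq_zero_of_ne_selectedLeaf hz hy hleft hright hl hne
  have hmem := t.selectedLeaf_mem_leaves y
  have hone : z (t.selectedLeaf y) = 1 := by
    rwa [Finset.sum_eq_single_of_mem _ hmem hoff] at hsum
  refine ⟨t.selectedLeaf y, ⟨hmem, hone, hoff⟩, ?_⟩
  rintro l ⟨hl, hzl, -⟩
  by_contra hne
  simp [hoff l hl hne] at hzl

/-- Integrality of the leaf-selection variables: if `z ≥ 0` sums to one over the
leaves and, for a 0/1 assignment `y` on split nodes, all mass on the left (resp.
right) leaf set of each split is at most `y s` (resp. `1 - y s`), then `z` places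
all its mass on exactly one leaf. -/
theorem stmt_8 (t : BTree) (hwf : t.WF) (z : ℕ → ℝ) (hz : ∀ l, 0 ≤ z l)
    (hsum : ∑ l ∈ t.leaves, z l = 1)
    (y : ℕ → ℝ) (hy : ∀ s ∈ t.splitNodes, y s = 0 ∨ y s = 1)
    (hleft : ∀ s ∈ t.splitNodes, ∑ l ∈ t.leftLeaves s, z l ≤ y s)
    (hright : ∀ s ∈ t.splitNodes, ∑ l ∈ t.rightLeaves s, z l ≤ 1 - y s) :
    ∃! l₀, l₀ ∈ t.leaves ∧ z l₀ = 1 ∧ ∀ l ∈ t.leaves, l ≠ l₀ → z l = 0 :=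
  stmt_8_general t z hz hsum y hy hleft hright
end
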